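/- arXiv:2107.08676 — 2 statements merged into one kernel-verified Lean document; each statement's English description precedes it below -/
import Mathlib

section
/- Let f be an n-variable Boolean function, t ∈ [n], and ε a real number with t-inf(f) ≤ ε ≤ 1 and ε > 0. If k is a positive integer satisfying k ≥ t − 1 + (n − t + 1)(1 − (1 − x)^{1/t}), where x = t-inf(f)/ε, then Σ_{i=k}^{n} p̂_f(i) ≤ ε (i.e., the Fourier spectrum of f is ε-concentrated on coefficients of weights below k). -/
/-!
Wiener–Khinchin together with orthogonality of characters on the coordinate subspace of `T`
shows that `inf_f(T)` is the Walsh mass of the `u` whose support meets `T`. Averaging over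
`t`-sets gives `t-inf(f) = Σ_u W_f(u)² (1 - C(n - wt u, t) / C(n, t))`. The weight is
increasing in `wt u`, so a Markov-type bound gives
`Σ_{wt u ≥ k} W_f(u)² ≤ t-inf(f) / (1 - C(n-k,t)/C(n,t))`, and
`C(n-k,t)/C(n,t) ≤ (1 - k/n)^t ≤ 1 - t-inf(f)/ε` for `k` above the threshold.
-/

open Finset

namespace BF

/-- Hamming weight of a vector in `F_2^n`. -/
def wt {n : ℕ} (a : Fin n → ZMod 2) : ℕ := (univ.filter fun i => a i ≠ 0).card

/-- Normalised Walsh transform `W_f(a) = 2^{-n} Σ_x (-1)^{f(x) ⊕ ⟨x,a⟩}`. -/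
noncomputable def walsh {n : ℕ} (f : (Fin n → ZMod 2) → ZMod 2) (a : Fin n → ZMod 2) : ℝ :=
  (1 / 2 ^ n) * ∑ x : Fin n → ZMod 2, (-1 : ℝ) ^ (f x + ∑ i, x i * a i).val

/-- Normalised auto-correlation `C_f(a) = 2^{-n} Σ_x (-1)^{f(x) ⊕ f(x ⊕ a)}`. -/
noncomputable def autocorr {n : ℕ} (f : (Fin n → ZMod 2) → ZMod 2) (a : Fin n → ZMod 2) : ℝ :=
  (1 / 2 ^ n) * ∑ x : Fin n → ZMod 2, (-1 : ℝ) ^ (f x + f (x + a)).val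

/-- Influence of the set of variables `T` on `f`:
`inf_f(T) = 1 - 2^{-#T} Σ_{a ≤ χ_T} C_f(a)`. -/
noncomputable def influence {n : ℕ} (f : (Fin n → ZMod 2) → ZMod 2) (T : Finset (Fin n)) : ℝ :=
  1 - (1 / 2 ^ T.card) *
    ∑ a ∈ univ.filter (fun a : Fin n → ZMod 2 => ∀ i, a i ≠ 0 → i ∈ T), autocorr f a

/-- Total influence `t-inf(f) = (Σ_{#T = t} inf_f(T)) / C(n,t)`. -/
noncomputable def totalInf {n : ℕ} (f : (Fin n → ZMod 2) → ZMod 2) (t : ℕ) : ℝ :=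
  (∑ T ∈ univ.filter (fun T : Finset (Fin n) => T.card = t), influence f T) / (n.choose t)

/-- `p̂_f(k) = Σ_{wt(u) = k} (W_f(u))²`. -/
noncomputable def pHat {n : ℕ} (f : (Fin n → ZMod 2) → ZMod 2) (k : ℕ) : ℝ :=
  ∑ u ∈ univ.filter (fun u : Fin n → ZMod 2 => wt u = k), (walsh f u) ^ 2

noncomputable def chi (b : ZMod 2) : ℝ := (-1) ^ b.val

@[simp] lemma chi_zero : chi 0 = 1 := by simp [chi]

@[simp] lemma chi_one : chi 1 = -1 := by simp [chi, ZMod.val_one]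

lemma chi_add (a b : ZMod 2) : chi (a + b) = chi a * chi b := by
  rw [chi, chi, chi, ZMod.val_add, ← pow_add, neg_one_pow_eq_pow_mod_two (n := a.val + b.val)]

lemma chi_mul_self (a : ZMod 2) : chi a * chi a = 1 := by
  rw [← chi_add, CharTwo.add_self_eq_zero, chi_zero]

lemma chi_sum {ι : Type*} (s : Finset ι) (g : ι → ZMod 2) :
    chi (∑ i ∈ s, g i) = ∏ i ∈ s, chi (g i) := by
  induction s using Finset.cons_induction with
  | empty => simp
  | cons i s hi ih => rw [sum_cons, prod_cons, chi_add, ih]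

lemma sum_chi_mul (c : ZMod 2) : ∑ b : ZMod 2, chi (b * c) = if c = 0 then 2 else 0 := by
  rw [show (univ : Finset (ZMod 2)) = {0, 1} from rfl, sum_pair zero_ne_one]
  obtain rfl | rfl : c = 0 ∨ c = 1 := by decide +revert
  all_goals norm_num

lemma pi_add_eq_zero_iff {ι : Type*} {x y : ι → ZMod 2} : x + y = 0 ↔ x = y := by
  simp only [funext_iff, Pi.add_apply, Pi.zero_apply, CharTwo.add_eq_zero]

lemma pi_add_add_cancel_right {ι : Type*} (x a : ι → ZMod 2) : x + a + a = x :=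
  funext fun i => CharTwo.add_cancel_right (x i) (a i)

open Matrix

theorem sum_chi_dotProduct_of_support_subset {n : ℕ} (T : Finset (Fin n))
    (u : Fin n → ZMod 2) :
    ∑ a ∈ univ.filter (fun a : Fin n → ZMod 2 => ∀ i, a i ≠ 0 → i ∈ T),
        chi (a ⬝ᵥ u) = if ∀ i ∈ T, u i = 0 then 2 ^ T.card else 0 := by
  have hsupp : univ.filter (fun a : Fin n → ZMod 2 => ∀ i, a i ≠ 0 → i ∈ T)
      = Fintype.piFinset fun i => if i ∈ T then univ else {0} := by
    ext a
    simp only [mem_filter, mem_univ, true_and, Fintype.mem_piFinset]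
    refine forall_congr' fun i => ?_
    split_ifs with hi <;> simp [hi]
  calc _ = ∏ i, ∑ b ∈ (if i ∈ T then univ else {0}), chi (b * u i) := by
        rw [hsupp, prod_univ_sum]
        simp only [dotProduct, chi_sum]
    _ = ∏ i, if i ∈ T then (if u i = 0 then 2 else 0) else 1 := by
        refine prod_congr rfl fun i _ => ?_
        split_ifs <;> simp [sum_chi_mul, *]
    _ = if ∀ i ∈ T, u i = 0 then 2 ^ T.card else 0 := by
        rw [prod_ite_mem, univ_inter, prod_ite_zero, prod_const]
        congr

theorem sum_chi_dotProduct {n : ℕ} (z : Fin n → ZMod 2) :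
    ∑ x : Fin n → ZMod 2, chi (x ⬝ᵥ z) = if z = 0 then 2 ^ n else 0 := by
  simpa [funext_iff] using sum_chi_dotProduct_of_support_subset univ z

theorem sum_chi_dotProduct_mul_chi_dotProduct {n : ℕ} (x y : Fin n → ZMod 2) :
    ∑ u : Fin n → ZMod 2, chi (x ⬝ᵥ u) * chi (y ⬝ᵥ u) = if x = y then 2 ^ n else 0 := by
  simp only [← chi_add, ← add_dotProduct, dotProduct_comm (x + y), sum_chi_dotProduct,
    pi_add_eq_zero_iff]

lemma walsh_eq_sum_chi {n : ℕ} (f : (Fin n → ZMod 2) → ZMod 2) (u : Fin n → ZMod 2) :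
    walsh f u = (2 ^ n)⁻¹ * ∑ x, chi (f x) * chi (x ⬝ᵥ u) := by
  simp only [walsh, one_div, ← chi_add]
  rfl

theorem sum_walsh_mul_walsh {n : ℕ} (f g : (Fin n → ZMod 2) → ZMod 2) :
    ∑ u, walsh f u * walsh g u = (2 ^ n)⁻¹ * ∑ x, chi (f x) * chi (g x) := by
  calc ∑ u, walsh f u * walsh g u
      = ((2 ^ n)⁻¹) ^ 2 * ∑ x, ∑ y, chi (f x) * chi (g y) *
          ∑ u : Fin n → ZMod 2, chi (x ⬝ᵥ u) * chi (y ⬝ᵥ u) := by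
        simp only [walsh_eq_sum_chi, mul_sum, sum_mul]
        rw [sum_congr rfl fun u _ => sum_comm, sum_comm]
        refine sum_congr rfl fun x _ => ?_
        rw [sum_comm]
        exact sum_congr rfl fun y _ => sum_congr rfl fun u _ => by ring
    _ = (2 ^ n)⁻¹ * ∑ x, chi (f x) * chi (g x) := by
        simp only [sum_chi_dotProduct_mul_chi_dotProduct, mul_ite, mul_zero, sum_ite_eq,
          mem_univ, if_true, ← sum_mul]
        field_simp

theorem walsh_mul_chi_dotProduct {n : ℕ} (f : (Fin n → ZMod 2) → ZMod 2)
    (a u : Fin n → ZMod 2) :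
    walsh f u * chi (a ⬝ᵥ u) = walsh (fun x => f (x + a)) u := by
  rw [walsh_eq_sum_chi, walsh_eq_sum_chi, mul_assoc, sum_mul]
  congr 1
  refine Fintype.sum_equiv (Equiv.addRight a) _ _ fun x => ?_
  simp only [Equiv.coe_addRight, pi_add_add_cancel_right, add_dotProduct, chi_add, mul_assoc]

theorem sum_walsh_sq_mul_chi_dotProduct {n : ℕ} (f : (Fin n → ZMod 2) → ZMod 2)
    (a : Fin n → ZMod 2) :
    ∑ u, walsh f u ^ 2 * chi (a ⬝ᵥ u) = autocorr f a := by
  simp only [sq, mul_assoc, walsh_mul_chi_dotProduct, sum_walsh_mul_walsh, autocorr, one_div,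
    ← chi_add]
  rfl

theorem sum_walsh_sq {n : ℕ} (f : (Fin n → ZMod 2) → ZMod 2) : ∑ u, walsh f u ^ 2 = 1 := by
  simp only [sq, sum_walsh_mul_walsh, chi_mul_self, sum_const, card_univ, Fintype.card_pi,
    ZMod.card, prod_const, Fintype.card_fin, nsmul_eq_mul, mul_one]
  push_cast
  field_simp

theorem influence_eq_one_sub_sum_walsh_sq {n : ℕ} (f : (Fin n → ZMod 2) → ZMod 2)
    (T : Finset (Fin n)) :
    influence f T = 1 - ∑ u ∈ univ.filter (fun u : Fin n → ZMod 2 => ∀ i ∈ T, u i = 0),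
      walsh f u ^ 2 := by
  have hsum : ∑ a ∈ univ.filter (fun a : Fin n → ZMod 2 => ∀ i, a i ≠ 0 → i ∈ T),
      autocorr f a
        = 2 ^ T.card * ∑ u ∈ univ.filter (fun u : Fin n → ZMod 2 => ∀ i ∈ T, u i = 0),
          walsh f u ^ 2 := by
    simp only [← sum_walsh_sq_mul_chi_dotProduct]
    rw [sum_comm]
    simp only [← mul_sum, sum_chi_dotProduct_of_support_subset, mul_ite, mul_zero]
    rw [sum_filter, mul_sum]
    exact sum_congr rfl fun u _ => by split_ifs <;> ring
  rw [influence, hsum, one_div, inv_mul_cancel_left₀ (by positivity)]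

theorem card_vanishing_subsets_eq_choose {n : ℕ} (t : ℕ) (u : Fin n → ZMod 2) :
    (univ.filter fun T : Finset (Fin n) => T.card = t ∧ ∀ i ∈ T, u i = 0).card
      = (n - wt u).choose t := by
  have hzero : (univ.filter fun i => u i = 0).card = n - wt u := by
    have := card_filter_add_card_filter_not (s := univ) (fun i => u i = 0)
    rw [card_univ, Fintype.card_fin] at this
    rw [wt]
    simp only [ne_eq]
    omega
  rw [← hzero, ← card_powersetCard]
  congr 1
  ext T
  simp [subset_iff, and_comm]

theorem sum_influence_eq {n : ℕ} (f : (Fin n → ZMod 2) → ZMod 2) (t : ℕ) :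
    ∑ T ∈ univ.filter (fun T : Finset (Fin n) => T.card = t), influence f T
      = n.choose t - ∑ u, walsh f u ^ 2 * (n - wt u).choose t := by
  simp only [influence_eq_one_sub_sum_walsh_sq, sum_sub_distrib, sum_const, univ_filter_card_eq,
    card_powersetCard, card_univ, Fintype.card_fin, nsmul_one]
  congr 1
  rw [sum_comm' (t' := univ)
    (s' := fun u => univ.filter fun T : Finset (Fin n) => T.card = t ∧ ∀ i ∈ T, u i = 0)
    (by simp)]
  simp only [sum_const, card_vanishing_subsets_eq_choose, nsmul_eq_mul, mul_comm]

/-- The probability that a uniformly random `t`-subset of `[n]` meets a fixed `w`-subset. -/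
noncomputable def influenceWeight (n t w : ℕ) : ℝ := 1 - ((n - w).choose t : ℝ) / n.choose t

theorem totalInf_eq_sum_walsh_sq_mul {n t : ℕ} (f : (Fin n → ZMod 2) → ZMod 2)
    (ht : t ≤ n) :
    totalInf f t = ∑ u, walsh f u ^ 2 * influenceWeight n t (wt u) := by
  have hC : (n.choose t : ℝ) ≠ 0 := by exact_mod_cast (Nat.choose_pos ht).ne'
  simp only [totalInf, sum_influence_eq, influenceWeight, mul_sub, mul_one, sum_sub_distrib,
    sum_walsh_sq, sub_div, div_self hC, sum_div, mul_div_assoc]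

lemma wt_le {n : ℕ} (u : Fin n → ZMod 2) : wt u ≤ n :=
  (card_filter_le _ _).trans_eq (card_fin n)

theorem sum_pHat_Icc_eq {n : ℕ} (f : (Fin n → ZMod 2) → ZMod 2) (k : ℕ) :
    ∑ i ∈ Icc k n, pHat f i = ∑ u ∈ univ.filter (fun u : Fin n → ZMod 2 => k ≤ wt u),
      walsh f u ^ 2 := by
  simp only [pHat]
  rw [sum_fiberwise_eq_sum_filter]
  congr 1
  ext u
  simp [wt_le]

theorem influenceWeight_mono (n t : ℕ) : Monotone (influenceWeight n t) := by
  intro v w hvw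
  unfold influenceWeight
  gcongr

theorem influenceWeight_nonneg (n t w : ℕ) : 0 ≤ influenceWeight n t w := by
  refine le_trans ?_ (influenceWeight_mono n t (Nat.zero_le w))
  rw [influenceWeight, Nat.sub_zero, sub_nonneg]
  exact div_self_le_one _

theorem sum_walsh_sq_mul_influenceWeight_le_totalInf {n t : ℕ} (f : (Fin n → ZMod 2) → ZMod 2)
    (ht : t ≤ n) (k : ℕ) :
    (∑ u ∈ univ.filter (fun u : Fin n → ZMod 2 => k ≤ wt u), walsh f u ^ 2)
      * influenceWeight n t k ≤ totalInf f t := by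
  rw [totalInf_eq_sum_walsh_sq_mul f ht, sum_mul]
  calc ∑ u ∈ univ.filter (fun u : Fin n → ZMod 2 => k ≤ wt u),
        walsh f u ^ 2 * influenceWeight n t k
      ≤ ∑ u ∈ univ.filter (fun u : Fin n → ZMod 2 => k ≤ wt u),
          walsh f u ^ 2 * influenceWeight n t (wt u) :=
        sum_le_sum fun u hu => mul_le_mul_of_nonneg_left
          (influenceWeight_mono n t (mem_filter.1 hu).2) (sq_nonneg _)
    _ ≤ ∑ u, walsh f u ^ 2 * influenceWeight n t (wt u) :=
        sum_le_sum_of_subset_of_nonneg (filter_subset _ _)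
          fun u _ _ => mul_nonneg (sq_nonneg _) (influenceWeight_nonneg _ _ _)

lemma descFactorial_mul_pow_le {m n : ℕ} (hmn : m ≤ n) (t : ℕ) :
    m.descFactorial t * n ^ t ≤ n.descFactorial t * m ^ t := by
  induction t with
  | zero => simp
  | succ t ih =>
    have hstep : (m - t) * n ≤ (n - t) * m := by
      rw [Nat.sub_mul, Nat.sub_mul, Nat.mul_comm n m]
      exact Nat.sub_le_sub_left (Nat.mul_le_mul_left t hmn) (m * n)
    calc m.descFactorial (t + 1) * n ^ (t + 1)
        = ((m - t) * n) * (m.descFactorial t * n ^ t) := by rw [Nat.descFactorial_succ]; ring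
      _ ≤ ((n - t) * m) * (n.descFactorial t * m ^ t) := Nat.mul_le_mul hstep ih
      _ = n.descFactorial (t + 1) * m ^ (t + 1) := by rw [Nat.descFactorial_succ]; ring

lemma choose_mul_pow_le {m n : ℕ} (hmn : m ≤ n) (t : ℕ) :
    m.choose t * n ^ t ≤ n.choose t * m ^ t := by
  have h := descFactorial_mul_pow_le hmn t
  rw [Nat.descFactorial_eq_factorial_mul_choose, Nat.descFactorial_eq_factorial_mul_choose,
    mul_assoc, mul_assoc] at h
  exact Nat.le_of_mul_le_mul_left h t.factorial_pos

theorem one_sub_one_sub_div_pow_le_influenceWeight {n t w : ℕ} (hw : w ≤ n) :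
    1 - (1 - (w : ℝ) / n) ^ t ≤ influenceWeight n t w := by
  rw [influenceWeight, sub_le_sub_iff_left]
  rcases Nat.eq_zero_or_pos n with rfl | hn
  · simp [div_self_le_one]
  have hcast : 1 - (w : ℝ) / n = ((n - w : ℕ) : ℝ) / n := by
    rw [Nat.cast_sub hw]; field_simp
  rw [hcast, div_pow]
  rcases Nat.eq_zero_or_pos (n.choose t) with hC | hC
  · rw [hC, Nat.cast_zero, div_zero]; positivity
  rw [div_le_div_iff₀ (by positivity) (by positivity)]
  exact_mod_cast (choose_mul_pow_le (Nat.sub_le n w) t).trans_eq (mul_comm _ _)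

theorem influenceWeight_pos {n t w : ℕ} (ht : 1 ≤ t) (hw : 1 ≤ w) (hwn : w ≤ n) :
    0 < influenceWeight n t w := by
  have hn : (0 : ℝ) < n := by exact_mod_cast hw.trans hwn
  refine lt_of_lt_of_le ?_ (one_sub_one_sub_div_pow_le_influenceWeight hwn)
  rw [sub_pos]
  refine pow_lt_one₀ ?_ ?_ (by omega)
  · rw [sub_nonneg, div_le_one hn]; exact_mod_cast hwn
  · rw [sub_lt_self_iff]; positivity

/-- As `(t - 1) (1 - x)^{1/t} ≥ 0`, the hypothesis on `k` implies
`k ≥ n (1 - (1 - x)^{1/t})`. -/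
theorem le_one_sub_one_sub_div_pow {n t : ℕ} {x k : ℝ} (hx : x ≤ 1) (ht : 1 ≤ t)
    (htn : t ≤ n) (hkn : k ≤ n)
    (hk : k ≥ (t : ℝ) - 1 + ((n : ℝ) - t + 1) * (1 - (1 - x) ^ ((1 : ℝ) / t))) :
    x ≤ 1 - (1 - k / n) ^ t := by
  set y := (1 - x) ^ ((1 : ℝ) / t) with hy
  have ht0 : (1 : ℝ) ≤ t := by exact_mod_cast ht
  have hn : (0 : ℝ) < n := by exact_mod_cast ht.trans htn
  have hy0 : 0 ≤ y := by positivity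
  have hyt : y ^ t = 1 - x := by
    rw [hy, one_div, Real.rpow_inv_natCast_pow (by linarith) (by omega)]
  have hky : 1 - k / n ≤ y := by
    have htn' : (t : ℝ) ≤ n := by exact_mod_cast htn
    rw [sub_le_comm, le_div_iff₀ hn]
    nlinarith
  have := pow_le_pow_left₀ (by rw [sub_nonneg, div_le_one hn]; exact hkn) hky t
  linarith

theorem spectrum_concentration_general {n : ℕ} (f : (Fin n → ZMod 2) → ZMod 2) (t : ℕ)
    (h1 : 1 ≤ t) (h2 : t ≤ n) (ε : ℝ) (hε0 : 0 < ε) (hεl : totalInf f t ≤ ε)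
    (k : ℕ) (hk : 1 ≤ k)
    (hkge : (k : ℝ) ≥ (t : ℝ) - 1 + ((n : ℝ) - t + 1) *
        (1 - (1 - totalInf f t / ε) ^ ((1 : ℝ) / (t : ℝ)))) :
    ∑ i ∈ Finset.Icc k n, pHat f i ≤ ε := by
  rcases lt_or_ge n k with hnk | hkn
  · rw [Icc_eq_empty_of_lt hnk, sum_empty]
    exact hε0.le
  have hx : totalInf f t / ε ≤ 1 := (div_le_one hε0).2 hεl
  have hweight : totalInf f t / ε ≤ influenceWeight n t k :=
    (le_one_sub_one_sub_div_pow hx h1 h2 (by exact_mod_cast hkn) hkge).trans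
      (one_sub_one_sub_div_pow_le_influenceWeight hkn)
  rw [sum_pHat_Icc_eq]
  refine le_of_mul_le_mul_right ?_ (influenceWeight_pos h1 hk hkn)
  calc _ ≤ totalInf f t := sum_walsh_sq_mul_influenceWeight_le_totalInf f h2 k
    _ ≤ ε * influenceWeight n t k := (div_le_iff₀' hε0).1 hweight

/-- the Fourier spectrum of `f` is `ε`-concentrated on coefficients of
weight below `k` whenever `k ≥ t - 1 + (n - t + 1)(1 - (1 - x)^{1/t})`,
where `x = t-inf(f)/ε`. -/
theorem spectrum_concentration {n : ℕ} (f : (Fin n → ZMod 2) → ZMod 2) (t : ℕ)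
    (h1 : 1 ≤ t) (h2 : t ≤ n) (ε : ℝ) (hε0 : 0 < ε) (hεl : totalInf f t ≤ ε) (hεu : ε ≤ 1)
    (k : ℕ) (hk : 1 ≤ k)
    (hkge : (k : ℝ) ≥ (t : ℝ) - 1 + ((n : ℝ) - t + 1) *
        (1 - (1 - totalInf f t / ε) ^ ((1 : ℝ) / (t : ℝ)))) :
    ∑ i ∈ Finset.Icc k n, pHat f i ≤ ε :=
  spectrum_concentration_general f t h1 h2 ε hε0 hεl k hk hkge

end BF
end

section
/- Let f be an n-variable Boolean function which is ε-far from being an s-junta. Then for every subset S ⊆ [n] with #S ≤ s, inf_f([n] \ S) ≥ 2ε. -/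
open Finset

namespace BF

/-- `g` is an `s`-junta: its output depends only on a set `S` of at most `s` variables. -/
def isJunta {n : ℕ} (s : ℕ) (g : (Fin n → ZMod 2) → ZMod 2) : Prop :=
  ∃ S : Finset (Fin n), S.card ≤ s ∧
    ∀ x y : Fin n → ZMod 2, (∀ i ∈ S, x i = y i) → g x = g y

/-! The influence of `T` is twice the average, over the shifts `a` supported on `T`, of the
fraction of inputs `x` with `f x ≠ f (x + a)`. For fixed `x`, the points `x + a` are exactly the
points `T.piecewise z x` with `z` supported on `T`, so the influence is also twice the average, over
such `z`, of the distance from `f` to `x ↦ f (T.piecewise z x)`. That function only depends on the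
variables outside `T`, so each of these distances is at least `ε` when `#Tᶜ ≤ s`. -/

section SupportedOn

variable {ι G : Type*} [Fintype ι] [DecidableEq ι] [AddCommGroup G] [Fintype G] [DecidableEq G]

def supportedOn (T : Finset ι) : Finset (ι → G) :=
  univ.filter fun a => ∀ i, a i ≠ 0 → i ∈ T

theorem mem_supportedOn {T : Finset ι} {a : ι → G} : a ∈ supportedOn T ↔ ∀ i ∉ T, a i = 0 := by
  simp only [supportedOn, mem_filter, mem_univ, true_and]
  exact forall_congr' fun i => not_imp_comm

theorem supportedOn_eq_piFinset (T : Finset ι) :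
    (supportedOn T : Finset (ι → G)) = Fintype.piFinset fun i => if i ∈ T then univ else {0} := by
  ext a
  simp only [supportedOn, mem_filter, mem_univ, true_and, Fintype.mem_piFinset]
  refine forall_congr' fun i => ?_
  split_ifs with hi <;> simp [hi]

theorem card_supportedOn (T : Finset ι) :
    (supportedOn T : Finset (ι → G)).card = Fintype.card G ^ T.card := by
  rw [supportedOn_eq_piFinset, Fintype.card_piFinset]
  simp [apply_ite Finset.card, prod_ite_mem]

theorem sum_card_ne_piecewise {β : Type*} [DecidableEq β] (f : (ι → G) → β) (T : Finset ι) :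
    ∑ z ∈ supportedOn T, (univ.filter fun x => f x ≠ f (T.piecewise z x)).card =
      ∑ a ∈ supportedOn T, (univ.filter fun x => f x ≠ f (x + a)).card := by
  simp only [card_filter]
  rw [sum_comm, sum_comm (s := supportedOn T)]
  refine sum_congr rfl fun x _ => ?_
  refine sum_nbij' (fun z => T.piecewise z x - x) (fun a => T.piecewise (x + a) 0)
    ?_ ?_ ?_ ?_ fun z _ => by simp
  · intro z _
    rw [mem_supportedOn]
    intro i hi
    simp [hi]
  · intro a _
    rw [mem_supportedOn]
    intro i hi
    simp [hi]
  · intro z hz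
    ext i
    by_cases hi : i ∈ T <;> simp [hi, mem_supportedOn.1 hz i]
  · intro a ha
    ext i
    by_cases hi : i ∈ T <;> simp [hi, mem_supportedOn.1 ha i]

end SupportedOn

theorem neg_one_pow_val_add (u v : ZMod 2) :
    (-1 : ℝ) ^ (u + v).val = 1 - 2 * if u ≠ v then 1 else 0 := by
  have hval : (u + v).val = if u ≠ v then 1 else 0 := by revert u v; decide
  split_ifs at hval ⊢ <;> norm_num [hval]

section Influence

variable {n : ℕ} (f : (Fin n → ZMod 2) → ZMod 2)

theorem autocorr_eq (a : Fin n → ZMod 2) :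
    autocorr f a = 1 - 2 * (univ.filter fun x => f x ≠ f (x + a)).card / 2 ^ n := by
  simp only [autocorr, neg_one_pow_val_add, sum_sub_distrib, ← mul_sum, sum_const, card_univ,
    Fintype.card_fun, ZMod.card, Fintype.card_fin, sum_boole]
  field_simp
  ring

theorem influence_eq (T : Finset (Fin n)) :
    influence f T = 2 * (∑ a ∈ supportedOn T, (univ.filter fun x => f x ≠ f (x + a)).card : ℕ) /
      (2 ^ T.card * 2 ^ n) := by
  -- the zero of `ZMod 2` in `influence` is found through its field structure, not defeq by `rfl`
  have hsupp : univ.filter (fun a : Fin n → ZMod 2 => ∀ i, a i ≠ 0 → i ∈ T) = supportedOn T := by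
    unfold supportedOn
    congr
  rw [influence, hsupp]
  simp only [autocorr_eq, sum_sub_distrib, ← sum_div, ← mul_sum, sum_const, card_supportedOn,
    ZMod.card]
  field_simp
  push_cast
  ring

theorem influence_eq_sum_piecewise (T : Finset (Fin n)) :
    influence f T =
      2 * (∑ z ∈ supportedOn T, (univ.filter fun x => f x ≠ f (T.piecewise z x)).card : ℕ) /
        (2 ^ T.card * 2 ^ n) := by
  rw [influence_eq, sum_card_ne_piecewise]

theorem isJunta_comp_piecewise {s : ℕ} {T : Finset (Fin n)} (hT : Tᶜ.card ≤ s)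
    (z : Fin n → ZMod 2) : isJunta s fun x => f (T.piecewise z x) :=
  ⟨Tᶜ, hT, fun _ _ hxy =>
    congrArg f (T.piecewise_congr (fun _ _ => rfl) fun i hi => hxy i (mem_compl.2 hi))⟩

end Influence

/-- if `f` is `ε`-far from every `s`-junta, then for every `S ⊆ [n]` with
`#S ≤ s`, `inf_f([n] \ S) ≥ 2ε`. -/
theorem influence_far_from_junta {n : ℕ} (f : (Fin n → ZMod 2) → ZMod 2) (s : ℕ) (ε : ℝ)
    (hfar : ∀ g : (Fin n → ZMod 2) → ZMod 2, isJunta s g →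
      ε ≤ ((univ.filter fun x : Fin n → ZMod 2 => f x ≠ g x).card : ℝ) / 2 ^ n) :
    ∀ S : Finset (Fin n), S.card ≤ s → 2 * ε ≤ influence f Sᶜ := by
  intro S hS
  have hdist (z : Fin n → ZMod 2) :
      ε * 2 ^ n ≤ (univ.filter fun x => f x ≠ f (Sᶜ.piecewise z x)).card := by
    have := hfar _ (isJunta_comp_piecewise f (by rwa [compl_compl]) z)
    rwa [le_div_iff₀ (by positivity)] at this
  rw [influence_eq_sum_piecewise, le_div_iff₀ (by positivity), Nat.cast_sum]
  calc 2 * ε * (2 ^ Sᶜ.card * 2 ^ n)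
      = 2 * ∑ _z ∈ supportedOn (G := ZMod 2) Sᶜ, ε * 2 ^ n := by
        rw [sum_const, card_supportedOn, ZMod.card, nsmul_eq_mul]
        push_cast
        ring
    _ ≤ _ := by
        gcongr with z
        exact hdist z

end BF
end
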